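/- Correctness of Must and Can for completion codes: for all Kernel Esterel programs p, p', constructive events E, E', and completion codes k, if E ⊢ p → (E', k, p') is derivable in the constructive behavioral semantics, then k ∈ Can⁺_K(p, E), and moreover if Must_K(p, E) ≠ ∅ then Must_K(p, E) = {k}. -/
import Mathlib


namespace EsterelCBS

/-- Signals are represented by natural numbers. -/
abbrev Signal := ℕ

/-- Kernel Esterel statements.  `done k` unifies `nothing` (k = 0), `pause` (k = 1)
and `exit k` (k ≥ 2).  `awaitImm pol s` waits for `s` to have the status given by
the polarity `pol` (`awaitImm true s` is the kernel statement `await immediate s`;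
the negative polarity is used in the derivative of `suspend`). -/
inductive Stmt : Type
  | done (k : ℕ)
  | emit (s : Signal)
  | awaitImm (pol : Bool) (s : Signal)
  | present (s : Signal) (p q : Stmt)
  | suspend (s : Signal) (p : Stmt)
  | seq (p q : Stmt)
  | par (p q : Stmt)
  | loop (p : Stmt)
  | trap (p : Stmt)
  | shift (p : Stmt)
  | sig (s : Signal) (p : Stmt)
  deriving DecidableEq

/-- Constructive signal statuses: present (+), absent (−), or unknown (⊥). -/
inductive CStatus : Type
  | pos
  | neg
  | bot
  deriving DecidableEq

/-- Statuses are combined by "present dominates, unknown next". -/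
def CStatus.or : CStatus → CStatus → CStatus
  | .pos, _ => .pos
  | _, .pos => .pos
  | .bot, _ => .bot
  | _, .bot => .bot
  | _, _ => .neg

/-- A constructive event is a finite map from signals to constructive statuses;
`none` means the signal is not in scope (not visible). -/
abbrev CEvent := Signal → Option CStatus

namespace CEvent

/-- The empty output event relative to `E`: every visible signal is absent. -/
def blank (E : CEvent) : CEvent := fun s => (E s).map fun _ => CStatus.neg

/-- The singleton output event emitting `s` (all other visible signals absent). -/
def single (E : CEvent) (s : Signal) : CEvent :=
  fun t => if t = s then (E t).map fun _ => CStatus.pos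
           else (E t).map fun _ => CStatus.neg

/-- Union of two output events. -/
def union (E₁ E₂ : CEvent) : CEvent := fun s =>
  match E₁ s, E₂ s with
  | some a, some b => some (a.or b)
  | some a, none => some a
  | none, o => o

/-- Update the status of a signal (possibly adding it to the domain). -/
def update (E : CEvent) (s : Signal) (v : CStatus) : CEvent :=
  fun t => if t = s then some v else E t

/-- Restriction of an output event by a local signal declaration: the binding of
the (new) signal `s` is replaced by the appropriate status − for the (old) `s`
(which is absent if the old `s` was not in scope). -/
def restrict (E' : CEvent) (s : Signal) (old : Option CStatus) : CEvent :=
  fun t => if t = s then old.map (fun _ => CStatus.neg) else E' t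

/-- The domain of an event: the set of signals in scope. -/
def dom (E : CEvent) : Set Signal := {s | E s ≠ none}

/-- A constructive event is total when no signal is mapped to ⊥. -/
def Total (E : CEvent) : Prop := ∀ s, E s ≠ some CStatus.bot

end CEvent

/-- Completion-code shift `↑` used by the `shift` statement. -/
def kup (k : ℕ) : ℕ := if 2 ≤ k then k + 1 else k

/-- Completion-code decrement `↓` used by the `trap` statement. -/
def kdown (k : ℕ) : ℕ := if k < 2 then k else if k = 2 then 0 else k - 1

/-- The δ function killing derivatives when the completion code is not 1. -/
def delta (k : ℕ) (p : Stmt) : Stmt := if k = 1 then p else .done 0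

/-- The constructive status corresponding to a polarity. -/
def polSt : Bool → CStatus
  | true => .pos
  | false => .neg

/-- Pairwise max of two sets of completion codes
(`Max K L = { max k l | k ∈ K, l ∈ L }`). -/
def codeMax (K L : Finset ℕ) : Finset ℕ := K.biUnion fun k => L.image (max k)

mutual

/-- `must p E = (Must_S(p,E), Must_K(p,E))`: the signals that must be emitted and
the completion codes that must be returned by `p` under `E` (paper Fig. 2). -/
def must : Stmt → CEvent → Finset Signal × Finset ℕ
  | .done k, _ => (∅, {k})
  | .emit s, _ => ({s}, {0})
  | .awaitImm pol s, E =>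
      if E s = some (polSt pol) then (∅, {0})
      else if E s = some (polSt (!pol)) then (∅, {1})
      else (∅, ∅)
  | .present s p q, E =>
      if E s = some .pos then must p E
      else if E s = some .neg then must q E
      else (∅, ∅)
  | .suspend _ p, E => must p E
  | .seq p q, E =>
      if 0 ∈ (must p E).2 then
        ((must p E).1 ∪ (must q E).1, (must q E).2)
      else must p E
  | .par p q, E =>
      ((must p E).1 ∪ (must q E).1, codeMax (must p E).2 (must q E).2)
  | .loop p, E => must p E
  | .trap p, E => ((must p E).1, (must p E).2.image kdown)
  | .shift p, E => ((must p E).1, (must p E).2.image kup)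
  | .sig s p, E =>
      if s ∈ (must p (E.update s .bot)).1 then
        (((must p (E.update s .pos)).1).erase s, (must p (E.update s .pos)).2)
      else if s ∉ (can true p (E.update s .bot)).1 then
        (((must p (E.update s .neg)).1).erase s, (must p (E.update s .neg)).2)
      else
        (((must p (E.update s .bot)).1).erase s, (must p (E.update s .bot)).2)

/-- `can b p E = (Can^b_S(p,E), Can^b_K(p,E))`: the signals that can be emitted
and the completion codes that can be returned by `p` under `E` (paper Fig. 2). -/
def can : Bool → Stmt → CEvent → Finset Signal × Finset ℕ
  | _, .done k, _ => (∅, {k})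
  | _, .emit s, _ => ({s}, {0})
  | _, .awaitImm pol s, E =>
      if E s = some (polSt pol) then (∅, {0})
      else if E s = some (polSt (!pol)) then (∅, {1})
      else (∅, {0, 1})
  | b, .present s p q, E =>
      if E s = some .pos then can b p E
      else if E s = some .neg then can b q E
      else ((can false p E).1 ∪ (can false q E).1,
            (can false p E).2 ∪ (can false q E).2)
  | b, .suspend _ p, E => can b p E
  | b, .seq p q, E =>
      if 0 ∉ (can b p E).2 then can b p E
      else if 0 ∈ (must p E).2 ∧ b = true then
        ((can b p E).1 ∪ (can true q E).1,
         ((can b p E).2.erase 0) ∪ (can true q E).2)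
      else
        ((can b p E).1 ∪ (can false q E).1,
         ((can b p E).2.erase 0) ∪ (can false q E).2)
  | b, .par p q, E =>
      ((can b p E).1 ∪ (can b q E).1, codeMax (can b p E).2 (can b q E).2)
  | b, .loop p, E => can b p E
  | b, .trap p, E => ((can b p E).1, (can b p E).2.image kdown)
  | b, .shift p, E => ((can b p E).1, (can b p E).2.image kup)
  | b, .sig s p, E =>
      if s ∈ (must p (E.update s .bot)).1 ∧ b = true then
        (((can b p (E.update s .pos)).1).erase s, (can b p (E.update s .pos)).2)
      else if s ∉ (can true p (E.update s .bot)).1 then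
        (((can b p (E.update s .neg)).1).erase s, (can b p (E.update s .neg)).2)
      else
        (((can b p (E.update s .bot)).1).erase s, (can b p (E.update s .bot)).2)

end

/-- The constructive behavioral semantics (CBS): `CBS E p E' k p'` means
`E ⊢ p → (E', k, p')`.  The rules are the same as for the logical behavioral
semantics except for the local signal declaration rules, which use `must`/`can`. -/
inductive CBS : CEvent → Stmt → CEvent → ℕ → Stmt → Prop
  | done {E : CEvent} {k : ℕ} :
      CBS E (.done k) E.blank k (.done 0)
  | emit {E : CEvent} {s : Signal} (h : E s ≠ none) :
      CBS E (.emit s) (E.single s) 0 (.done 0)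
  | awaitP {E : CEvent} {pol : Bool} {s : Signal}
      (h : E s = some (polSt pol)) :
      CBS E (.awaitImm pol s) E.blank 0 (.done 0)
  | awaitM {E : CEvent} {pol : Bool} {s : Signal}
      (h : E s = some (polSt (!pol))) :
      CBS E (.awaitImm pol s) E.blank 1 (.awaitImm pol s)
  | presentP {E E' : CEvent} {s : Signal} {p q p' : Stmt} {k : ℕ}
      (h : E s = some .pos) (hp : CBS E p E' k p') :
      CBS E (.present s p q) E' k p'
  | presentM {E E' : CEvent} {s : Signal} {p q q' : Stmt} {k : ℕ}
      (h : E s = some .neg) (hq : CBS E q E' k q') :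
      CBS E (.present s p q) E' k q'
  | suspend {E E' : CEvent} {s : Signal} {p p' : Stmt} {k : ℕ}
      (hp : CBS E p E' k p') :
      CBS E (.suspend s p) E' k
        (delta k (.seq (.awaitImm false s) (.suspend s p')))
  | seqK {E E' : CEvent} {p q p' : Stmt} {k : ℕ}
      (h : k ≠ 0) (hp : CBS E p E' k p') :
      CBS E (.seq p q) E' k (delta k (.seq p' q))
  | seq0 {E E₁ E₂ : CEvent} {p q p' q' : Stmt} {k : ℕ}
      (hp : CBS E p E₁ 0 p') (hq : CBS E q E₂ k q') :
      CBS E (.seq p q) (E₁.union E₂) k q'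
  | loop {E E' : CEvent} {p p' : Stmt} {k : ℕ}
      (h : k ≠ 0) (hp : CBS E p E' k p') :
      CBS E (.loop p) E' k (delta k (.seq p' (.loop p)))
  | trap {E E' : CEvent} {p p' : Stmt} {k : ℕ}
      (hp : CBS E p E' k p') :
      CBS E (.trap p) E' (kdown k) (delta k (.trap p'))
  | shift {E E' : CEvent} {p p' : Stmt} {k : ℕ}
      (hp : CBS E p E' k p') :
      CBS E (.shift p) E' (kup k) (delta k (.shift p'))
  | par {E E₁ E₂ : CEvent} {p q p' q' : Stmt} {k₁ k₂ : ℕ}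
      (hp : CBS E p E₁ k₁ p') (hq : CBS E q E₂ k₂ q') :
      CBS E (.par p q) (E₁.union E₂) (max k₁ k₂)
        (delta (max k₁ k₂) (.par p' q'))
  | sigP {E E' : CEvent} {s : Signal} {p p' : Stmt} {k : ℕ}
      (h : s ∈ (must p (E.update s .bot)).1)
      (hp : CBS (E.update s .pos) p E' k p') :
      CBS E (.sig s p) (E'.restrict s (E s)) k (delta k (.sig s p'))
  | sigM {E E' : CEvent} {s : Signal} {p p' : Stmt} {k : ℕ}
      (h : s ∉ (can true p (E.update s .bot)).1)
      (hp : CBS (E.update s .neg) p E' k p') :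
      CBS E (.sig s p) (E'.restrict s (E s)) k (delta k (.sig s p'))

end EsterelCBS

namespace EsterelCBS


/-- Information order on events: `Refines E E'` means `E'` is at least as defined as `E`. -/
def Refines (E E' : CEvent) : Prop := ∀ t, E t = E' t ∨ E t = some .bot

lemma Refines.refl (E : CEvent) : Refines E E := fun _ => Or.inl rfl

lemma Refines.update {E E' : CEvent} (h : Refines E E') (s : Signal) (v : CStatus) :
    Refines (E.update s v) (E'.update s v) := by
  intro t
  unfold CEvent.update
  by_cases ht : t = s
  · simp [ht]
  · simp only [ht, if_false]
    exact h t

lemma Refines.update_bot {E E' : CEvent} (h : Refines E E') (s : Signal) (v : CStatus) :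
    Refines (E.update s .bot) (E'.update s v) := by
  intro t
  unfold CEvent.update
  by_cases ht : t = s
  · simp [ht]
  · simp only [ht, if_false]
    exact h t

lemma polSt_ne_bot (pol : Bool) : polSt pol ≠ CStatus.bot := by
  cases pol <;> simp [polSt]

lemma mem_codeMax {K L : Finset ℕ} {k l : ℕ} (hk : k ∈ K) (hl : l ∈ L) :
    max k l ∈ codeMax K L := by
  simp only [codeMax, Finset.mem_biUnion, Finset.mem_image]
  exact ⟨k, hk, l, hl, rfl⟩

lemma codeMax_mono {K K' L L' : Finset ℕ} (hK : K ⊆ K') (hL : L ⊆ L') :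
    codeMax K L ⊆ codeMax K' L' := by
  intro x hx
  simp only [codeMax, Finset.mem_biUnion, Finset.mem_image] at hx ⊢
  obtain ⟨k, hk, l, hl, rfl⟩ := hx
  exact ⟨k, hK hk, l, hL hl, rfl⟩

lemma codeMax_card_le_one {K L : Finset ℕ} (hK : K.card ≤ 1) (hL : L.card ≤ 1) :
    (codeMax K L).card ≤ 1 := by
  rw [Finset.card_le_one] at *
  intro a ha b hb
  simp only [codeMax, Finset.mem_biUnion, Finset.mem_image] at ha hb
  obtain ⟨k1, hk1, l1, hl1, rfl⟩ := ha
  obtain ⟨k2, hk2, l2, hl2, rfl⟩ := hb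
  rw [hK k1 hk1 k2 hk2, hL l1 hl1 l2 hl2]

lemma mustK_card : ∀ (p : Stmt) (E : CEvent), ((must p E).2).card ≤ 1 := by
  intro p
  induction p with
  | done k => intro E; simp [must]
  | emit s => intro E; simp [must]
  | awaitImm pol s => intro E; rw [must]; split_ifs <;> simp
  | present s p q ihp ihq => intro E; rw [must]; split_ifs <;> simp [ihp, ihq]
  | suspend s p ih => intro E; rw [must]; exact ih E
  | seq p q ihp ihq => intro E; rw [must]; split_ifs <;> simp [ihp, ihq]
  | par p q ihp ihq => intro E; rw [must]; exact codeMax_card_le_one (ihp E) (ihq E)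
  | loop p ih => intro E; rw [must]; exact ih E
  | trap p ih => intro E; rw [must]; exact le_trans Finset.card_image_le (ih E)
  | shift p ih => intro E; rw [must]; exact le_trans Finset.card_image_le (ih E)
  | sig s p ih => intro E; rw [must]; split_ifs <;> exact ih _

theorem key : ∀ p : Stmt,
    (∀ (E E' : CEvent) (b b' : Bool), Refines E E' → (b = true → b' = true) →
      (can b' p E').1 ⊆ (can b p E).1 ∧ (can b' p E').2 ⊆ (can b p E).2) ∧
    (∀ (E E' : CEvent), Refines E E' →
      (must p E).1 ⊆ (must p E').1 ∧ (must p E).2 ⊆ (must p E').2) ∧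
    (∀ E : CEvent, (must p E).1 ⊆ (can true p E).1 ∧ (must p E).2 ⊆ (can true p E).2) := by
  intro p
  induction p with
  | done k =>
    refine ⟨fun E E' b b' _ _ => ?_, fun E E' _ => ?_, fun E => ?_⟩ <;>
      simp [must, can]
  | emit s =>
    refine ⟨fun E E' b b' _ _ => ?_, fun E E' _ => ?_, fun E => ?_⟩ <;>
      simp [must, can]
  | awaitImm pol s =>
    refine ⟨fun E E' b b' hR _ => ?_, fun E E' hR => ?_, fun E => ?_⟩
    · rcases hR s with h | h
      · rw [can, can, h]; split_ifs <;> simp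
      · have h1 : E s ≠ some (polSt pol) := by rw [h]; intro hh; exact polSt_ne_bot pol (Option.some.inj hh).symm
        have h2 : E s ≠ some (polSt (!pol)) := by rw [h]; intro hh; exact polSt_ne_bot (!pol) (Option.some.inj hh).symm
        rw [can, can, if_neg h1, if_neg h2]
        split_ifs <;> simp
    · rcases hR s with h | h
      · rw [must, must, h]; split_ifs <;> simp
      · have h1 : E s ≠ some (polSt pol) := by rw [h]; intro hh; exact polSt_ne_bot pol (Option.some.inj hh).symm
        have h2 : E s ≠ some (polSt (!pol)) := by rw [h]; intro hh; exact polSt_ne_bot (!pol) (Option.some.inj hh).symm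
        rw [must, if_neg h1, if_neg h2]
        simp
    · rw [must, can]; split_ifs <;> simp
  | present s p q ihp ihq =>
    obtain ⟨pC, pM, pMC⟩ := ihp
    obtain ⟨qC, qM, qMC⟩ := ihq
    refine ⟨fun E E' b b' hR hb => ?_, fun E E' hR => ?_, fun E => ?_⟩
    · rcases hR s with h | h
      · rw [can, can, h]
        split_ifs with h1 h2
        · exact pC E E' b b' hR hb
        · exact qC E E' b b' hR hb
        · exact ⟨Finset.union_subset_union (pC E E' false false hR (fun h => h)).1
              (qC E E' false false hR (fun h => h)).1,
            Finset.union_subset_union (pC E E' false false hR (fun h => h)).2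
              (qC E E' false false hR (fun h => h)).2⟩
      · have h1 : E s ≠ some .pos := by rw [h]; simp
        have h2 : E s ≠ some .neg := by rw [h]; simp
        rw [can, can, if_neg h1, if_neg h2]
        split_ifs with g1 g2
        · exact ⟨(pC E E' false b' hR (by simp)).1.trans Finset.subset_union_left,
            (pC E E' false b' hR (by simp)).2.trans Finset.subset_union_left⟩
        · exact ⟨(qC E E' false b' hR (by simp)).1.trans Finset.subset_union_right,
            (qC E E' false b' hR (by simp)).2.trans Finset.subset_union_right⟩
        · exact ⟨Finset.union_subset_union (pC E E' false false hR (fun h => h)).1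
              (qC E E' false false hR (fun h => h)).1,
            Finset.union_subset_union (pC E E' false false hR (fun h => h)).2
              (qC E E' false false hR (fun h => h)).2⟩
    · rcases hR s with h | h
      · rw [must, must, h]
        split_ifs with h1 h2
        · exact pM E E' hR
        · exact qM E E' hR
        · simp
      · have h1 : E s ≠ some .pos := by rw [h]; simp
        have h2 : E s ≠ some .neg := by rw [h]; simp
        rw [must, if_neg h1, if_neg h2]
        simp
    · rw [must, can]
      split_ifs with h1 h2
      · exact pMC E
      · exact qMC E
      · simp
  | suspend s p ih =>
    obtain ⟨pC, pM, pMC⟩ := ih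
    exact ⟨fun E E' b b' hR hb => by rw [can, can]; exact pC E E' b b' hR hb,
      fun E E' hR => by rw [must, must]; exact pM E E' hR,
      fun E => by rw [must, can]; exact pMC E⟩
  | seq p q ihp ihq =>
    obtain ⟨pC, pM, pMC⟩ := ihp
    obtain ⟨qC, qM, qMC⟩ := ihq
    refine ⟨fun E E' b b' hR hb => ?_, fun E E' hR => ?_, fun E => ?_⟩
    · have hpc := pC E E' b b' hR hb
      rw [can, can]
      by_cases hs : 0 ∈ (can b' p E').2
      · have ht : 0 ∈ (can b p E).2 := hpc.2 hs
        rw [if_neg (not_not_intro hs), if_neg (not_not_intro ht)]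
        by_cases hm' : 0 ∈ (must p E').2 ∧ b' = true
        · rw [if_pos hm']
          by_cases hm : 0 ∈ (must p E).2 ∧ b = true
          · rw [if_pos hm]
            exact ⟨Finset.union_subset_union hpc.1 (qC E E' true true hR (fun h => h)).1,
              Finset.union_subset_union (Finset.erase_subset_erase 0 hpc.2)
                (qC E E' true true hR (fun h => h)).2⟩
          · rw [if_neg hm]
            exact ⟨Finset.union_subset_union hpc.1 (qC E E' false true hR (by simp)).1,
              Finset.union_subset_union (Finset.erase_subset_erase 0 hpc.2)
                (qC E E' false true hR (by simp)).2⟩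
        · rw [if_neg hm']
          by_cases hm : 0 ∈ (must p E).2 ∧ b = true
          · exact absurd ⟨(pM E E' hR).2 hm.1, hb hm.2⟩ hm'
          · rw [if_neg hm]
            exact ⟨Finset.union_subset_union hpc.1 (qC E E' false false hR (fun h => h)).1,
              Finset.union_subset_union (Finset.erase_subset_erase 0 hpc.2)
                (qC E E' false false hR (fun h => h)).2⟩
      · rw [if_pos hs]
        by_cases ht : 0 ∈ (can b p E).2
        · rw [if_neg (not_not_intro ht)]
          have h2 : (can b' p E').2 ⊆ (can b p E).2.erase 0 := by
            intro x hx
            exact Finset.mem_erase.mpr ⟨fun h0 => hs (h0 ▸ hx), hpc.2 hx⟩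
          split_ifs
          · exact ⟨hpc.1.trans Finset.subset_union_left,
              h2.trans Finset.subset_union_left⟩
          · exact ⟨hpc.1.trans Finset.subset_union_left,
              h2.trans Finset.subset_union_left⟩
        · rw [if_pos ht]; exact hpc
    · have ihm := pM E E' hR
      rw [must, must]
      by_cases h : 0 ∈ (must p E).2
      · rw [if_pos h, if_pos (ihm.2 h)]
        exact ⟨Finset.union_subset_union ihm.1 (qM E E' hR).1, (qM E E' hR).2⟩
      · rw [if_neg h]
        by_cases h' : 0 ∈ (must p E').2
        · rw [if_pos h']
          refine ⟨ihm.1.trans Finset.subset_union_left, ?_⟩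
          intro x hx
          exfalso
          exact h ((Finset.card_le_one.mp (mustK_card p E')) x (ihm.2 hx) 0 h' ▸ hx)
        · rw [if_neg h']; exact ihm
    · rw [must, can]
      by_cases hm : 0 ∈ (must p E).2
      · rw [if_pos hm, if_neg (not_not_intro ((pMC E).2 hm)), if_pos ⟨hm, rfl⟩]
        exact ⟨Finset.union_subset_union (pMC E).1 (qMC E).1,
          (qMC E).2.trans Finset.subset_union_right⟩
      · rw [if_neg hm]
        by_cases hc : 0 ∈ (can true p E).2
        · rw [if_neg (not_not_intro hc)]
          have h2 : (must p E).2 ⊆ (can true p E).2.erase 0 := by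
            intro x hx
            exact Finset.mem_erase.mpr ⟨fun h0 => hm (h0 ▸ hx), (pMC E).2 hx⟩
          split_ifs
          · exact ⟨(pMC E).1.trans Finset.subset_union_left, h2.trans Finset.subset_union_left⟩
          · exact ⟨(pMC E).1.trans Finset.subset_union_left, h2.trans Finset.subset_union_left⟩
        · rw [if_pos hc]; exact pMC E
  | par p q ihp ihq =>
    obtain ⟨pC, pM, pMC⟩ := ihp
    obtain ⟨qC, qM, qMC⟩ := ihq
    refine ⟨fun E E' b b' hR hb => ?_, fun E E' hR => ?_, fun E => ?_⟩
    · rw [can, can]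
      exact ⟨Finset.union_subset_union (pC E E' b b' hR hb).1 (qC E E' b b' hR hb).1,
        codeMax_mono (pC E E' b b' hR hb).2 (qC E E' b b' hR hb).2⟩
    · rw [must, must]
      exact ⟨Finset.union_subset_union (pM E E' hR).1 (qM E E' hR).1,
        codeMax_mono (pM E E' hR).2 (qM E E' hR).2⟩
    · rw [must, can]
      exact ⟨Finset.union_subset_union (pMC E).1 (qMC E).1,
        codeMax_mono (pMC E).2 (qMC E).2⟩
  | loop p ih =>
    obtain ⟨pC, pM, pMC⟩ := ih
    exact ⟨fun E E' b b' hR hb => by rw [can, can]; exact pC E E' b b' hR hb,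
      fun E E' hR => by rw [must, must]; exact pM E E' hR,
      fun E => by rw [must, can]; exact pMC E⟩
  | trap p ih =>
    obtain ⟨pC, pM, pMC⟩ := ih
    exact ⟨fun E E' b b' hR hb => by
        rw [can, can]
        exact ⟨(pC E E' b b' hR hb).1, Finset.image_subset_image (pC E E' b b' hR hb).2⟩,
      fun E E' hR => by
        rw [must, must]
        exact ⟨(pM E E' hR).1, Finset.image_subset_image (pM E E' hR).2⟩,
      fun E => by
        rw [must, can]
        exact ⟨(pMC E).1, Finset.image_subset_image (pMC E).2⟩⟩
  | shift p ih =>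
    obtain ⟨pC, pM, pMC⟩ := ih
    exact ⟨fun E E' b b' hR hb => by
        rw [can, can]
        exact ⟨(pC E E' b b' hR hb).1, Finset.image_subset_image (pC E E' b b' hR hb).2⟩,
      fun E E' hR => by
        rw [must, must]
        exact ⟨(pM E E' hR).1, Finset.image_subset_image (pM E E' hR).2⟩,
      fun E => by
        rw [must, can]
        exact ⟨(pMC E).1, Finset.image_subset_image (pMC E).2⟩⟩
  | sig s p ih =>
    obtain ⟨pC, pM, pMC⟩ := ih
    refine ⟨fun E E' b b' hR hb => ?_, fun E E' hR => ?_, fun E => ?_⟩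
    · rw [can, can]
      by_cases h1' : s ∈ (must p (E'.update s .bot)).1 ∧ b' = true
      · rw [if_pos h1']
        by_cases h1 : s ∈ (must p (E.update s .bot)).1 ∧ b = true
        · rw [if_pos h1]
          have h := pC (E.update s .pos) (E'.update s .pos) b b' (hR.update s .pos) hb
          exact ⟨Finset.erase_subset_erase s h.1, h.2⟩
        · rw [if_neg h1]
          have hscan : s ∈ (can true p (E.update s .bot)).1 :=
            (pC (E.update s .bot) (E'.update s .bot) true true (hR.update s .bot)
              (fun h => h)).1 ((pMC (E'.update s .bot)).1 h1'.1)
          rw [if_neg (not_not_intro hscan)]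
          have h := pC (E.update s .bot) (E'.update s .pos) b b' (hR.update_bot s .pos) hb
          exact ⟨Finset.erase_subset_erase s h.1, h.2⟩
      · rw [if_neg h1']
        by_cases h2' : s ∈ (can true p (E'.update s .bot)).1
        · rw [if_neg (not_not_intro h2')]
          by_cases h1 : s ∈ (must p (E.update s .bot)).1 ∧ b = true
          · exact absurd ⟨(pM (E.update s .bot) (E'.update s .bot) (hR.update s .bot)).1 h1.1,
              hb h1.2⟩ h1'
          · rw [if_neg h1]
            have hscan : s ∈ (can true p (E.update s .bot)).1 :=
              (pC (E.update s .bot) (E'.update s .bot) true true (hR.update s .bot)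
                (fun h => h)).1 h2'
            rw [if_neg (not_not_intro hscan)]
            have h := pC (E.update s .bot) (E'.update s .bot) b b' (hR.update s .bot) hb
            exact ⟨Finset.erase_subset_erase s h.1, h.2⟩
        · rw [if_pos h2']
          by_cases h1 : s ∈ (must p (E.update s .bot)).1 ∧ b = true
          · exact absurd ((pMC (E'.update s .bot)).1
              ((pM (E.update s .bot) (E'.update s .bot) (hR.update s .bot)).1 h1.1)) h2'
          · rw [if_neg h1]
            by_cases h2 : s ∈ (can true p (E.update s .bot)).1
            · rw [if_neg (not_not_intro h2)]
              have h := pC (E.update s .bot) (E'.update s .neg) b b' (hR.update_bot s .neg) hb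
              exact ⟨Finset.erase_subset_erase s h.1, h.2⟩
            · rw [if_pos h2]
              have h := pC (E.update s .neg) (E'.update s .neg) b b' (hR.update s .neg) hb
              exact ⟨Finset.erase_subset_erase s h.1, h.2⟩
    · rw [must, must]
      by_cases h1 : s ∈ (must p (E.update s .bot)).1
      · rw [if_pos h1, if_pos ((pM _ _ (hR.update s .bot)).1 h1)]
        have h := pM (E.update s .pos) (E'.update s .pos) (hR.update s .pos)
        exact ⟨Finset.erase_subset_erase s h.1, h.2⟩
      · rw [if_neg h1]
        by_cases h2 : s ∈ (can true p (E.update s .bot)).1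
        · rw [if_neg (not_not_intro h2)]
          by_cases h1' : s ∈ (must p (E'.update s .bot)).1
          · rw [if_pos h1']
            have h := pM (E.update s .bot) (E'.update s .pos) (hR.update_bot s .pos)
            exact ⟨Finset.erase_subset_erase s h.1, h.2⟩
          · rw [if_neg h1']
            by_cases h2' : s ∈ (can true p (E'.update s .bot)).1
            · rw [if_neg (not_not_intro h2')]
              have h := pM (E.update s .bot) (E'.update s .bot) (hR.update s .bot)
              exact ⟨Finset.erase_subset_erase s h.1, h.2⟩
            · rw [if_pos h2']
              have h := pM (E.update s .bot) (E'.update s .neg) (hR.update_bot s .neg)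
              exact ⟨Finset.erase_subset_erase s h.1, h.2⟩
        · rw [if_pos h2]
          have h2' : s ∉ (can true p (E'.update s .bot)).1 := fun hx =>
            h2 ((pC (E.update s .bot) (E'.update s .bot) true true (hR.update s .bot)
              (fun h => h)).1 hx)
          have h1' : s ∉ (must p (E'.update s .bot)).1 := fun hx =>
            h2' ((pMC (E'.update s .bot)).1 hx)
          rw [if_neg h1', if_pos h2']
          have h := pM (E.update s .neg) (E'.update s .neg) (hR.update s .neg)
          exact ⟨Finset.erase_subset_erase s h.1, h.2⟩
    · rw [must, can]
      by_cases h1 : s ∈ (must p (E.update s .bot)).1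
      · rw [if_pos h1, if_pos ⟨h1, rfl⟩]
        have h := pMC (E.update s .pos)
        exact ⟨Finset.erase_subset_erase s h.1, h.2⟩
      · have hc1 : ¬(s ∈ (must p (E.update s .bot)).1 ∧ true = true) := fun hh => h1 hh.1
        rw [if_neg h1, if_neg hc1]
        by_cases h2 : s ∈ (can true p (E.update s .bot)).1
        · rw [if_neg (not_not_intro h2), if_neg (not_not_intro h2)]
          have h := pMC (E.update s .bot)
          exact ⟨Finset.erase_subset_erase s h.1, h.2⟩
        · rw [if_pos h2, if_pos h2]
          have h := pMC (E.update s .neg)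
          exact ⟨Finset.erase_subset_erase s h.1, h.2⟩

theorem mainAux : ∀ {E : CEvent} {p : Stmt} {E' : CEvent} {k : ℕ} {p' : Stmt},
    CBS E p E' k p' →
    (∀ b, k ∈ (can b p E).2) ∧ ((must p E).2 ≠ ∅ → (must p E).2 = {k}) := by
  intro E p E' k p' h
  induction h with
  | done => exact ⟨fun b => by simp [can], fun _ => by simp [must]⟩
  | emit h => exact ⟨fun b => by simp [can], fun _ => by simp [must]⟩
  | @awaitP E pol s h =>
    exact ⟨fun b => by rw [can, if_pos h]; simp, fun _ => by rw [must, if_pos h]⟩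
  | @awaitM E pol s h =>
    have hne : E s ≠ some (polSt pol) := by
      rw [h]; intro hh
      cases pol <;> simp [polSt] at hh
    exact ⟨fun b => by rw [can, if_neg hne, if_pos h]; simp,
      fun _ => by rw [must, if_neg hne, if_pos h]⟩
  | @presentP E E'' s p q p'' k h hp ih =>
    have hne : E s ≠ some .neg := by simp [h]
    exact ⟨fun b => by rw [can, if_pos h]; exact ih.1 b,
      fun hne2 => by
        rw [must, if_pos h] at hne2 ⊢
        exact ih.2 hne2⟩
  | @presentM E E'' s p q q'' k h hq ih =>
    have hne : E s ≠ some .pos := by simp [h]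
    exact ⟨fun b => by rw [can, if_neg hne, if_pos h]; exact ih.1 b,
      fun hne2 => by
        rw [must, if_neg hne, if_pos h] at hne2 ⊢
        exact ih.2 hne2⟩
  | suspend hp ih =>
    exact ⟨fun b => by rw [can]; exact ih.1 b,
      fun hne => by rw [must] at hne ⊢; exact ih.2 hne⟩
  | @seqK E E'' p q p'' k hk hp ih =>
    constructor
    · intro b
      rw [can]
      by_cases h : 0 ∈ (can b p E).2
      · rw [if_neg (not_not_intro h)]
        split_ifs <;>
          exact Finset.mem_union_left _ (Finset.mem_erase.mpr ⟨hk, ih.1 b⟩)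
      · rw [if_pos h]; exact ih.1 b
    · intro hne
      rw [must] at hne ⊢
      by_cases h : 0 ∈ (must p E).2
      · exfalso
        have := ih.2 (Finset.ne_empty_of_mem h)
        rw [this] at h
        exact hk (Finset.mem_singleton.mp h).symm
      · rw [if_neg h] at hne ⊢
        exact ih.2 hne
  | @seq0 E E₁ E₂ p q p'' q'' k hp hq ihp ihq =>
    constructor
    · intro b
      rw [can, if_neg (not_not_intro (ihp.1 b))]
      split_ifs
      · exact Finset.mem_union_right _ (ihq.1 true)
      · exact Finset.mem_union_right _ (ihq.1 false)
    · intro hne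
      rw [must] at hne ⊢
      by_cases h : 0 ∈ (must p E).2
      · rw [if_pos h] at hne ⊢
        exact ihq.2 hne
      · rw [if_neg h] at hne ⊢
        exact absurd (ihp.2 hne ▸ Finset.mem_singleton_self 0) h
  | loop hk hp ih =>
    exact ⟨fun b => by rw [can]; exact ih.1 b,
      fun hne => by rw [must] at hne ⊢; exact ih.2 hne⟩
  | trap hp ih =>
    constructor
    · intro b
      rw [can]
      exact Finset.mem_image_of_mem kdown (ih.1 b)
    · intro hne
      rw [must] at hne ⊢
      have h1 := ih.2 (by intro h; apply hne; show Finset.image _ _ = ∅; rw [h]; simp)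
      show Finset.image _ _ = _
      rw [h1]
      simp
  | shift hp ih =>
    constructor
    · intro b
      rw [can]
      exact Finset.mem_image_of_mem kup (ih.1 b)
    · intro hne
      rw [must] at hne ⊢
      have h1 := ih.2 (by intro h; apply hne; show Finset.image _ _ = ∅; rw [h]; simp)
      show Finset.image _ _ = _
      rw [h1]
      simp
  | par hp hq ihp ihq =>
    constructor
    · intro b
      rw [can]
      exact mem_codeMax (ihp.1 b) (ihq.1 b)
    · intro hne
      rw [must] at hne ⊢
      obtain ⟨x, hx⟩ := Finset.nonempty_iff_ne_empty.mpr hne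
      show codeMax _ _ = _
      simp only [codeMax, Finset.mem_biUnion, Finset.mem_image] at hx
      obtain ⟨a, ha, c, hc, rfl⟩ := hx
      rw [ihp.2 (Finset.ne_empty_of_mem ha), ihq.2 (Finset.ne_empty_of_mem hc)]
      simp [codeMax]
  | @sigP E E'' s p p'' k h hp ih =>
    constructor
    · intro b
      rw [can]
      by_cases hb : b = true
      · subst hb
        rw [if_pos ⟨h, rfl⟩]
        exact ih.1 true
      · rw [if_neg (fun hh => hb hh.2)]
        have hs : s ∈ (can true p (E.update s .bot)).1 := ((key p).2.2 _).1 h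
        rw [if_neg (not_not_intro hs)]
        exact ((key p).1 (E.update s .bot) (E.update s .pos) b b
          ((Refines.refl E).update_bot s .pos) (fun h => h)).2 (ih.1 b)
    · intro hne
      rw [must] at hne ⊢
      rw [if_pos h] at hne ⊢
      exact ih.2 hne
  | @sigM E E'' s p p'' k h hp ih =>
    have h1 : s ∉ (must p (E.update s .bot)).1 := fun hh => h (((key p).2.2 _).1 hh)
    constructor
    · intro b
      rw [can, if_neg (fun hh => h1 hh.1), if_pos h]
      exact ih.1 b
    · intro hne
      rw [must, if_neg h1, if_pos h] at hne ⊢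
      exact ih.2 hne


/-- **Correctness of Must and Can for completion codes**: if
`E ⊢ p → (E', k, p')` in the CBS, then `k ∈ Can⁺_K(p,E)` and, if
`Must_K(p,E)` is non-empty, then `Must_K(p,E) = {k}`. -/
theorem must_can_correct_codes :
    ∀ (p p' : Stmt) (E E' : CEvent) (k : ℕ),
      CBS E p E' k p' →
      k ∈ (can true p E).2 ∧
      ((must p E).2 ≠ ∅ → (must p E).2 = {k}) := by
  intro p p' E E' k h
  exact ⟨(mainAux h).1 true, (mainAux h).2⟩

end EsterelCBS
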